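/- Let 𝔤 := 𝔨₀ + 𝔞 + 𝔫 ⊆ 𝔰𝔬(p,q), let x ∈ ℝ^{p+q} be nonzero, and set m := dim 𝔤 − dim 𝔤_x. Then: (a) if x^{p−i+1} + x^{p+i} ≠ 0 for some 1 ≤ i ≤ q and k is the minimal such index, then m = p+q−k; (b) if p > q, x^{p−i+1} + x^{p+i} = 0 for all 1 ≤ i ≤ q, and x^j ≠ 0 for some 1 ≤ j ≤ p−q, then m = p−1; (c) if x^j = 0 for all 1 ≤ j ≤ p−q and x^{p−i+1} + x^{p+i} = 0 for all 1 ≤ i ≤ q, then m = max{ j ∈ {1,…,q} : x^{p+j} ≠ 0 }. -/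

import Mathlib

/-!
With `w_i = e_{p-i+1} - e_{p+i}`, the isotropic flag `F_a = span {w_1, …, w_a}` is preserved by
`𝔤 = 𝔨₀ + 𝔞 + 𝔫`: `𝔨₀` kills every `w_i`, `𝔞` rescales it and `𝔫` maps it into `F_i`. Since
`𝔤 ⊆ 𝔰𝔬(p,q)` is skew for `⟨·,·⟩`, rank–nullity turns `m` into `dim 𝔤x`, and
`⟨Xx, w_i⟩ = -⟨x, Xw_i⟩` vanishes as soon as `x ⊥ F_i`. So in (a) and (b) `𝔤x` lies in the common
kernel of `⟨·, x⟩` and the `⟨·, w_i⟩` with `x ⊥ F_i` (`k`, resp. `q + 1`, independent functionals),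
while in (c) `x ∈ F_l`, hence `𝔤x ⊆ F_l`. For the reverse inequalities, the elements
`u ∧ v : y ↦ ⟨v, y⟩ u - ⟨u, y⟩ v` of `𝔤` built from the `e_j` and `w_i` produce vectors of `𝔤x`
on which suitable coordinate functionals form a diagonal matrix with nonzero diagonal.
-/

open Matrix

noncomputable section

/-- 1-based standard basis vector `e i` of `ℝ^n` (zero if `i` is out of range). -/
def stdE (n i : ℕ) : Fin n → ℝ := fun j => if (j : ℕ) + 1 = i then 1 else 0

/-- `w i := e_{p-i+1} - e_{p+i}`. -/
def wVec (p q i : ℕ) : Fin (p + q) → ℝ := stdE (p + q) (p - i + 1) - stdE (p + q) (p + i)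

/-- `v i := e_{p-i+1} + e_{p+i}`. -/
def vVec (p q i : ℕ) : Fin (p + q) → ℝ := stdE (p + q) (p - i + 1) + stdE (p + q) (p + i)

/-- The scalar product of signature `(p,q)` on `ℝ^{p+q}`. -/
def ip (p q : ℕ) (x y : Fin (p + q) → ℝ) : ℝ :=
  ∑ i : Fin (p + q), (if (i : ℕ) < p then (1 : ℝ) else -1) * x i * y i

/-- The matrix `J = diag(I_p, -I_q)`. -/
def Jmat (p q : ℕ) : Matrix (Fin (p + q)) (Fin (p + q)) ℝ :=
  Matrix.diagonal (fun i => if (i : ℕ) < p then (1 : ℝ) else -1)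

/-- Entry of a square matrix, with 1-based indices (0 outside the range). -/
def ent {n : ℕ} (X : Matrix (Fin n) (Fin n) ℝ) (i j : ℕ) : ℝ :=
  if h : i - 1 < n ∧ j - 1 < n then X ⟨i - 1, h.1⟩ ⟨j - 1, h.2⟩ else 0

/-- Coordinate of a vector, with 1-based index (0 outside the range). -/
def vent {n : ℕ} (x : Fin n → ℝ) (i : ℕ) : ℝ :=
  if h : i - 1 < n then x ⟨i - 1, h⟩ else 0

lemma ent_zero {n : ℕ} (i j : ℕ) : ent (0 : Matrix (Fin n) (Fin n) ℝ) i j = 0 := by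
  unfold ent; split <;> simp

lemma ent_add {n : ℕ} (X Y : Matrix (Fin n) (Fin n) ℝ) (i j : ℕ) :
    ent (X + Y) i j = ent X i j + ent Y i j := by
  unfold ent; split <;> simp [Matrix.add_apply]

lemma ent_smul {n : ℕ} (c : ℝ) (X : Matrix (Fin n) (Fin n) ℝ) (i j : ℕ) :
    ent (c • X) i j = c * ent X i j := by
  unfold ent; split <;> simp [Matrix.smul_apply]

/-- The Lie algebra `𝔰𝔬(p,q)`, as a set of matrices. -/
def soSet (p q : ℕ) : Set (Matrix (Fin (p + q)) (Fin (p + q)) ℝ) :=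
  {X | Xᵀ * Jmat p q + Jmat p q * X = 0}

lemma soSet_zero (p q : ℕ) : (0 : Matrix (Fin (p + q)) (Fin (p + q)) ℝ) ∈ soSet p q := by
  simp [soSet]

lemma soSet_add (p q : ℕ) {X Y : Matrix (Fin (p + q)) (Fin (p + q)) ℝ}
    (hX : X ∈ soSet p q) (hY : Y ∈ soSet p q) : X + Y ∈ soSet p q := by
  simp only [soSet, Set.mem_setOf_eq] at *
  rw [Matrix.transpose_add, Matrix.add_mul, Matrix.mul_add,
    show Xᵀ * Jmat p q + Yᵀ * Jmat p q + (Jmat p q * X + Jmat p q * Y)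
      = (Xᵀ * Jmat p q + Jmat p q * X) + (Yᵀ * Jmat p q + Jmat p q * Y) by abel,
    hX, hY, add_zero]

lemma soSet_smul (p q : ℕ) (c : ℝ) {X : Matrix (Fin (p + q)) (Fin (p + q)) ℝ}
    (hX : X ∈ soSet p q) : c • X ∈ soSet p q := by
  simp only [soSet, Set.mem_setOf_eq] at *
  rw [Matrix.transpose_smul, Matrix.smul_mul, Matrix.mul_smul, ← smul_add, hX, smul_zero]

/-- The set `𝔭` of symmetric elements of `𝔰𝔬(p,q)` (Cartan decomposition). -/
def pSet (p q : ℕ) : Set (Matrix (Fin (p + q)) (Fin (p + q)) ℝ) :=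
  {X | X ∈ soSet p q ∧ Xᵀ = X}

/-- The nilpotent Iwasawa factor `𝔫`, as a set of matrices; the conditions are the
entry conditions on the blocks `A`, `B`, `D` (1-based indices; `A i j = ent X i j`,
`B i l = ent X i (p + l)`, `D i j = ent X (p + i) (p + j)`). -/
def nSet (p q : ℕ) : Set (Matrix (Fin (p + q)) (Fin (p + q)) ℝ) :=
  {X | X ∈ soSet p q ∧
    (∀ i j, 1 ≤ i → i ≤ p - q → 1 ≤ j → j ≤ p - q → ent X i j = 0) ∧
    (∀ l, 1 ≤ l → l ≤ q → ent X (p - l + 1) (p + l) = 0) ∧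
    (∀ k l, 1 ≤ k → k ≤ p - q → 1 ≤ l → l ≤ q →
      ent X k (p - l + 1) = ent X k (p + l)) ∧
    (∀ i j, 1 ≤ i → i < j → j ≤ q →
      ent X (p + 1 - j) (p + 1 - i) = ent X (p + 1 - j) (p + i)) ∧
    (∀ i j, 1 ≤ i → i < j → j ≤ q →
      ent X (p + i) (p + j) = - ent X (p + 1 - i) (p + j))}

/-- The abelian factor `𝔞`, as a set of matrices: all entries vanish except the
pairs in positions `(p-l+1, p+l)` and `(p+l, p-l+1)`, `1 ≤ l ≤ q`, which are equal. -/
def aSet (p q : ℕ) : Set (Matrix (Fin (p + q)) (Fin (p + q)) ℝ) :=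
  {X | (∀ l, 1 ≤ l → l ≤ q → ent X (p - l + 1) (p + l) = ent X (p + l) (p - l + 1)) ∧
    (∀ i j, 1 ≤ i → i ≤ p + q → 1 ≤ j → j ≤ p + q →
      (¬ ∃ l, 1 ≤ l ∧ l ≤ q ∧ ((i = p - l + 1 ∧ j = p + l) ∨ (i = p + l ∧ j = p - l + 1))) →
      ent X i j = 0)}

/-- `𝔨₀`: skew-symmetric upper-left `(p-q)×(p-q)` block, all other entries zero. -/
def kSet (p q : ℕ) : Set (Matrix (Fin (p + q)) (Fin (p + q)) ℝ) :=
  {X | (∀ i j, 1 ≤ i → i ≤ p - q → 1 ≤ j → j ≤ p - q → ent X i j = - ent X j i) ∧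
    (∀ i j, 1 ≤ i → i ≤ p + q → 1 ≤ j → j ≤ p + q →
      ¬(i ≤ p - q ∧ j ≤ p - q) → ent X i j = 0)}

/-- The nilpotent Iwasawa factor `𝔫` as an `ℝ`-subspace of `M_{p+q}(ℝ)`. -/
def nSub (p q : ℕ) : Submodule ℝ (Matrix (Fin (p + q)) (Fin (p + q)) ℝ) where
  carrier := nSet p q
  zero_mem' := by
    refine ⟨soSet_zero p q, ?_, ?_, ?_, ?_, ?_⟩ <;> intros <;> simp [ent_zero]
  add_mem' := by
    rintro X Y ⟨h0, h1, h2, h3, h4, h5⟩ ⟨g0, g1, g2, g3, g4, g5⟩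
    refine ⟨soSet_add p q h0 g0, ?_, ?_, ?_, ?_, ?_⟩
    · intro i j hi hi' hj hj'
      rw [ent_add, h1 i j hi hi' hj hj', g1 i j hi hi' hj hj', add_zero]
    · intro l hl hl'
      rw [ent_add, h2 l hl hl', g2 l hl hl', add_zero]
    · intro k l hk hk' hl hl'
      rw [ent_add, ent_add, h3 k l hk hk' hl hl', g3 k l hk hk' hl hl']
    · intro i j hi hij hj
      rw [ent_add, ent_add, h4 i j hi hij hj, g4 i j hi hij hj]
    · intro i j hi hij hj
      rw [ent_add, ent_add, h5 i j hi hij hj, g5 i j hi hij hj]; ring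
  smul_mem' := by
    rintro c X ⟨h0, h1, h2, h3, h4, h5⟩
    refine ⟨soSet_smul p q c h0, ?_, ?_, ?_, ?_, ?_⟩
    · intro i j hi hi' hj hj'
      rw [ent_smul, h1 i j hi hi' hj hj', mul_zero]
    · intro l hl hl'
      rw [ent_smul, h2 l hl hl', mul_zero]
    · intro k l hk hk' hl hl'
      rw [ent_smul, ent_smul, h3 k l hk hk' hl hl']
    · intro i j hi hij hj
      rw [ent_smul, ent_smul, h4 i j hi hij hj]
    · intro i j hi hij hj
      rw [ent_smul, ent_smul, h5 i j hi hij hj]; ring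

/-- The abelian factor `𝔞` as an `ℝ`-subspace of `M_{p+q}(ℝ)`. -/
def aSub (p q : ℕ) : Submodule ℝ (Matrix (Fin (p + q)) (Fin (p + q)) ℝ) where
  carrier := aSet p q
  zero_mem' := by
    refine ⟨?_, ?_⟩ <;> intros <;> simp [ent_zero]
  add_mem' := by
    rintro X Y ⟨h1, h2⟩ ⟨g1, g2⟩
    refine ⟨?_, ?_⟩
    · intro l hl hl'
      rw [ent_add, ent_add, h1 l hl hl', g1 l hl hl']
    · intro i j hi hi' hj hj' hne
      rw [ent_add, h2 i j hi hi' hj hj' hne, g2 i j hi hi' hj hj' hne, add_zero]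
  smul_mem' := by
    rintro c X ⟨h1, h2⟩
    refine ⟨?_, ?_⟩
    · intro l hl hl'
      rw [ent_smul, ent_smul, h1 l hl hl']
    · intro i j hi hi' hj hj' hne
      rw [ent_smul, h2 i j hi hi' hj hj' hne, mul_zero]

/-- `𝔨₀` as an `ℝ`-subspace of `M_{p+q}(ℝ)`. -/
def kSub (p q : ℕ) : Submodule ℝ (Matrix (Fin (p + q)) (Fin (p + q)) ℝ) where
  carrier := kSet p q
  zero_mem' := by
    refine ⟨?_, ?_⟩ <;> intros <;> simp [ent_zero]
  add_mem' := by
    rintro X Y ⟨h1, h2⟩ ⟨g1, g2⟩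
    refine ⟨?_, ?_⟩
    · intro i j hi hi' hj hj'
      rw [ent_add, ent_add, h1 i j hi hi' hj hj', g1 i j hi hi' hj hj']; ring
    · intro i j hi hi' hj hj' hne
      rw [ent_add, h2 i j hi hi' hj hj' hne, g2 i j hi hi' hj hj' hne, add_zero]
  smul_mem' := by
    rintro c X ⟨h1, h2⟩
    refine ⟨?_, ?_⟩
    · intro i j hi hi' hj hj'
      rw [ent_smul, ent_smul, h1 i j hi hi' hj hj']; ring
    · intro i j hi hi' hj hj' hne
      rw [ent_smul, h2 i j hi hi' hj hj' hne, mul_zero]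

/-- The subspace `{X ∈ M_n(ℝ) : X x = 0}`. -/
def kerAt {n : ℕ} (x : Fin n → ℝ) : Submodule ℝ (Matrix (Fin n) (Fin n) ℝ) where
  carrier := {X | X *ᵥ x = 0}
  zero_mem' := by simp [Matrix.zero_mulVec]
  add_mem' := by
    intro X Y hX hY
    simp only [Set.mem_setOf_eq] at *
    rw [Matrix.add_mulVec, hX, hY, add_zero]
  smul_mem' := by
    intro c X hX
    simp only [Set.mem_setOf_eq] at *
    rw [Matrix.smul_mulVec, hX, smul_zero]

/-- The exponential of a matrix, as a unit of `M_n(ℝ)`, i.e. an element of `GL(n, ℝ)`. -/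
def expUnit {n : ℕ} (X : Matrix (Fin n) (Fin n) ℝ) : (Matrix (Fin n) (Fin n) ℝ)ˣ where
  val := NormedSpace.exp X
  inv := NormedSpace.exp (-X)
  val_inv := by
    rw [← Matrix.exp_add_of_commute X (-X) (Commute.neg_right (Commute.refl X)),
      add_neg_cancel, NormedSpace.exp_zero]
  inv_val := by
    rw [← Matrix.exp_add_of_commute (-X) X (Commute.neg_left (Commute.refl X)),
      neg_add_cancel, NormedSpace.exp_zero]

/-- The subgroup `N = exp(𝔫)` of `GL(p+q, ℝ)` generated by exponentials of elements of `𝔫`. -/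
def Ngrp (p q : ℕ) : Subgroup (Matrix (Fin (p + q)) (Fin (p + q)) ℝ)ˣ :=
  Subgroup.closure {g | ∃ X ∈ nSet p q, g = expUnit X}

/-- The subgroup `AN` of `GL(p+q, ℝ)` generated by exponentials of elements of `𝔞 ∪ 𝔫`. -/
def ANgrp (p q : ℕ) : Subgroup (Matrix (Fin (p + q)) (Fin (p + q)) ℝ)ˣ :=
  Subgroup.closure {g | ∃ X ∈ aSet p q ∪ nSet p q, g = expUnit X}

/-- The subgroup `Q = K₀AN` of `GL(p+q, ℝ)` generated by exponentials of `𝔨₀ ∪ 𝔞 ∪ 𝔫`. -/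
def Qgrp (p q : ℕ) : Subgroup (Matrix (Fin (p + q)) (Fin (p + q)) ℝ)ˣ :=
  Subgroup.closure {g | ∃ X ∈ kSet p q ∪ aSet p q ∪ nSet p q, g = expUnit X}

/-- The orbit `G(x)` of a point `x ∈ ℝ^n` under a subgroup `G` of `GL(n, ℝ)`. -/
def orb {n : ℕ} (G : Subgroup (Matrix (Fin n) (Fin n) ℝ)ˣ) (x : Fin n → ℝ) :
    Set (Fin n → ℝ) :=
  {v | ∃ g ∈ G, (g : Matrix (Fin n) (Fin n) ℝ) *ᵥ x = v}

end

open Module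

section LinearAlgebra

variable {K M ι : Type*} [Field K] [AddCommGroup M] [Module K M]

lemma exists_mem_forall_apply_eq_of_diagonal (V : Submodule K M) (φ : ι → Dual K M)
    (S : Finset ι) (h : ∀ i ∈ S, ∃ y ∈ V, φ i y ≠ 0 ∧ ∀ j ∈ S, j ≠ i → φ j y = 0)
    (f : S → K) : ∃ y ∈ V, ∀ i : S, φ i y = f i := by
  choose! y hyV hyi hyj using h
  refine ⟨∑ i : S, (f i / φ i (y i)) • y i,
    Submodule.sum_mem _ fun i _ => Submodule.smul_mem _ _ (hyV i i.2), fun j => ?_⟩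
  rw [map_sum, Finset.sum_eq_single j]
  · simp [div_mul_cancel₀ _ (hyi j j.2)]
  · intro i _ hij
    simp [hyj i i.2 j j.2 fun h => hij (Subtype.ext h).symm]
  · simp

theorem card_le_finrank_of_diagonal [Module.Finite K M] (V : Submodule K M) (φ : ι → Dual K M)
    (S : Finset ι) (h : ∀ i ∈ S, ∃ y ∈ V, φ i y ≠ 0 ∧ ∀ j ∈ S, j ≠ i → φ j y = 0) :
    S.card ≤ finrank K V := by
  have hΦ : Function.Surjective (LinearMap.pi fun i : S => φ i ∘ₗ V.subtype) := fun f => by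
    obtain ⟨y, hyV, hy⟩ := exists_mem_forall_apply_eq_of_diagonal V φ S h f
    exact ⟨⟨y, hyV⟩, funext hy⟩
  simpa using LinearMap.finrank_le_finrank_of_surjective hΦ

theorem finrank_add_card_le_of_diagonal [Module.Finite K M] (V : Submodule K M)
    (φ : ι → Dual K M) (S : Finset ι)
    (h : ∀ i ∈ S, ∃ y, φ i y ≠ 0 ∧ ∀ j ∈ S, j ≠ i → φ j y = 0)
    (hV : ∀ y ∈ V, ∀ i ∈ S, φ i y = 0) :
    finrank K V + S.card ≤ finrank K M := by
  set Φ : M →ₗ[K] S → K := LinearMap.pi fun i : S => φ i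
  have hΦ : LinearMap.range Φ = ⊤ := LinearMap.range_eq_top.2 fun f => by
    obtain ⟨y, -, hy⟩ := exists_mem_forall_apply_eq_of_diagonal ⊤ φ S (by simpa using h) f
    exact ⟨y, funext hy⟩
  have hker : V ≤ LinearMap.ker Φ := fun y hy => by
    simpa [Φ, funext_iff] using fun i hi => hV y hy i hi
  have := Φ.finrank_range_add_finrank_ker
  rw [hΦ, finrank_top, finrank_fintype_fun_eq_card, Fintype.card_coe] at this
  have := Submodule.finrank_mono hker
  omega

theorem Submodule.finrank_map_add_finrank_inf_ker [FiniteDimensional K M] {N : Type*}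
    [AddCommGroup N] [Module K N] (G : Submodule K M) (f : M →ₗ[K] N) :
    finrank K (G.map f) + finrank K ↥(G ⊓ LinearMap.ker f) = finrank K G := by
  have h := (f.domRestrict G).finrank_range_add_finrank_ker
  have e : (LinearMap.ker f).comap G.subtype = (G ⊓ LinearMap.ker f).comap G.subtype := by
    rw [Submodule.comap_inf, Submodule.comap_subtype_self, top_inf_eq]
  rwa [LinearMap.range_domRestrict, LinearMap.ker_domRestrict, e,
    (Submodule.comapSubtypeEquivOfLe inf_le_left).finrank_eq] at h

theorem card_union_Icc_of_forall_le {s : Finset ℕ} {p : ℕ} (hs : ∀ j ∈ s, j ≤ p) (q : ℕ) :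
    (s ∪ Finset.Icc (p + 1) (p + q)).card = s.card + q := by
  rw [Finset.card_union_of_disjoint (Finset.disjoint_left.2 fun j hj hj' => by
    have := hs j hj
    simp only [Finset.mem_Icc] at hj'
    omega)]
  simp

end LinearAlgebra

section Coordinates

variable {n : ℕ}

lemma vent_eq (x : Fin n → ℝ) {i : ℕ} (h1 : 1 ≤ i) (h2 : i ≤ n) :
    vent x i = x ⟨i - 1, by omega⟩ :=
  dif_pos (by omega)

lemma vent_ext {x y : Fin n → ℝ} (h : ∀ i, 1 ≤ i → i ≤ n → vent x i = vent y i) : x = y := by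
  funext r
  have := h (r + 1) (by omega) (by omega)
  rwa [vent_eq _ (by omega) (by omega), vent_eq _ (by omega) (by omega)] at this

def ventL (n i : ℕ) : Dual ℝ (Fin n → ℝ) where
  toFun x := vent x i
  map_add' x y := by unfold vent; split <;> simp
  map_smul' c x := by unfold vent; split <;> simp

@[simp] lemma ventL_apply (i : ℕ) (x : Fin n → ℝ) : ventL n i x = vent x i := rfl

@[simp] lemma vent_zero (i : ℕ) : vent (0 : Fin n → ℝ) i = 0 :=
  map_zero (ventL n i)

@[simp] lemma vent_add (x y : Fin n → ℝ) (i : ℕ) : vent (x + y) i = vent x i + vent y i :=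
  map_add (ventL n i) x y

@[simp] lemma vent_sub (x y : Fin n → ℝ) (i : ℕ) : vent (x - y) i = vent x i - vent y i :=
  map_sub (ventL n i) x y

@[simp] lemma vent_neg (x : Fin n → ℝ) (i : ℕ) : vent (-x) i = -vent x i :=
  map_neg (ventL n i) x

@[simp] lemma vent_smul (c : ℝ) (x : Fin n → ℝ) (i : ℕ) : vent (c • x) i = c * vent x i :=
  map_smul (ventL n i) c x

lemma vent_stdE {i j : ℕ} (hj : 1 ≤ j) (hjn : j ≤ n) :
    vent (stdE n i) j = if j = i then 1 else 0 := by
  simp only [vent_eq _ hj hjn, stdE]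
  congr 1
  simp only [eq_iff_iff]
  omega

lemma ent_eq (X : Matrix (Fin n) (Fin n) ℝ) {i j : ℕ} (hi1 : 1 ≤ i) (hi2 : i ≤ n)
    (hj1 : 1 ≤ j) (hj2 : j ≤ n) :
    ent X i j = X ⟨i - 1, by omega⟩ ⟨j - 1, by omega⟩ :=
  dif_pos ⟨by omega, by omega⟩

lemma vent_mulVec_stdE (X : Matrix (Fin n) (Fin n) ℝ) {i j : ℕ} (hi1 : 1 ≤ i) (hi2 : i ≤ n)
    (hj1 : 1 ≤ j) (hj2 : j ≤ n) :
    vent (X *ᵥ stdE n j) i = ent X i j := by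
  rw [vent_eq _ hi1 hi2, ent_eq X hi1 hi2 hj1 hj2, Matrix.mulVec, dotProduct,
    Finset.sum_eq_single ⟨j - 1, by omega⟩]
  · simp [stdE, show j - 1 + 1 = j by omega]
  · intro c _ hc
    simp only [stdE, mul_ite, mul_one, mul_zero, ite_eq_right_iff]
    intro h
    exact absurd (Fin.ext (by simp; omega)) hc
  · simp

end Coordinates

section ScalarProduct

variable {p q : ℕ}

lemma ip_eq_dotProduct (x y : Fin (p + q) → ℝ) : ip p q x y = x ⬝ᵥ (Jmat p q *ᵥ y) := by
  unfold ip Jmat dotProduct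
  refine Finset.sum_congr rfl fun i _ => ?_
  rw [Matrix.mulVec_diagonal]; ring

lemma ip_comm (x y : Fin (p + q) → ℝ) : ip p q x y = ip p q y x := by
  unfold ip; exact Finset.sum_congr rfl fun i _ => by ring

lemma ip_add_left (x y z : Fin (p + q) → ℝ) : ip p q (x + y) z = ip p q x z + ip p q y z := by
  simp only [ip_eq_dotProduct, add_dotProduct]

lemma ip_sub_left (x y z : Fin (p + q) → ℝ) : ip p q (x - y) z = ip p q x z - ip p q y z := by
  simp only [ip_eq_dotProduct, sub_dotProduct]

lemma ip_smul_left (c : ℝ) (x z : Fin (p + q) → ℝ) : ip p q (c • x) z = c * ip p q x z := by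
  simp only [ip_eq_dotProduct, smul_dotProduct, smul_eq_mul]

def ipR (p q : ℕ) (z : Fin (p + q) → ℝ) : Dual ℝ (Fin (p + q) → ℝ) where
  toFun y := ip p q y z
  map_add' x y := ip_add_left x y z
  map_smul' c y := ip_smul_left c y z

@[simp] lemma ipR_apply (z y : Fin (p + q) → ℝ) : ipR p q z y = ip p q y z := rfl

lemma ip_stdE_left (y : Fin (p + q) → ℝ) {j : ℕ} (h1 : 1 ≤ j) (h2 : j ≤ p + q) :
    ip p q (stdE (p + q) j) y = (if j ≤ p then 1 else -1) * vent y j := by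
  unfold ip
  rw [Finset.sum_eq_single ⟨j - 1, by omega⟩]
  · simp [stdE, vent_eq y h1 h2, show j - 1 + 1 = j by omega,
      show j - 1 < p ↔ j ≤ p by omega]
  · intro i _ hi
    have : (i : ℕ) + 1 ≠ j := fun h => hi (Fin.ext (by simp; omega))
    simp [stdE, this]
  · simp

lemma ip_wVec_right (y : Fin (p + q) → ℝ) (hpq : q ≤ p) {b : ℕ} (hb1 : 1 ≤ b) (hb2 : b ≤ q) :
    ip p q y (wVec p q b) = vent y (p - b + 1) + vent y (p + b) := by
  rw [ip_comm, wVec, ip_sub_left, ip_stdE_left y (by omega) (by omega),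
    ip_stdE_left y (by omega) (by omega), if_pos (by omega), if_neg (by omega)]
  ring

lemma vent_wVec {b j : ℕ} (hj1 : 1 ≤ j) (hj2 : j ≤ p + q) :
    vent (wVec p q b) j = (if j = p - b + 1 then 1 else 0) - (if j = p + b then 1 else 0) := by
  rw [wVec, vent_sub, vent_stdE hj1 hj2, vent_stdE hj1 hj2]

lemma ip_stdE_wVec (hpq : q ≤ p) {j b : ℕ} (hb1 : 1 ≤ b) (hb2 : b ≤ q) :
    ip p q (stdE (p + q) j) (wVec p q b) =
      (if j = p - b + 1 then 1 else 0) + (if j = p + b then 1 else 0) := by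
  rw [ip_wVec_right _ hpq hb1 hb2, vent_stdE (by omega) (by omega),
    vent_stdE (by omega) (by omega)]
  congr 1 <;> simp only [eq_comm]

lemma ip_wVec_wVec (hpq : q ≤ p) {a b : ℕ} (ha1 : 1 ≤ a) (ha2 : a ≤ q) (hb1 : 1 ≤ b)
    (hb2 : b ≤ q) : ip p q (wVec p q a) (wVec p q b) = 0 := by
  rw [ip_wVec_right _ hpq hb1 hb2, vent_wVec (by omega) (by omega),
    vent_wVec (by omega) (by omega)]
  split_ifs <;> first | (exfalso; omega) | norm_num

end ScalarProduct

section OrthogonalAlgebra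

variable {p q : ℕ}

def soSub (p q : ℕ) : Submodule ℝ (Matrix (Fin (p + q)) (Fin (p + q)) ℝ) where
  carrier := soSet p q
  zero_mem' := soSet_zero p q
  add_mem' := soSet_add p q
  smul_mem' := soSet_smul p q

lemma ip_mulVec_left {X : Matrix (Fin (p + q)) (Fin (p + q)) ℝ} (hX : X ∈ soSet p q)
    (u v : Fin (p + q) → ℝ) : ip p q (X *ᵥ u) v = - ip p q u (X *ᵥ v) := by
  have h : Xᵀ * Jmat p q = -(Jmat p q * X) := eq_neg_of_add_eq_zero_left hX
  rw [ip_eq_dotProduct, ip_eq_dotProduct, dotProduct_comm, dotProduct_mulVec, ← mulVec_transpose,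
    dotProduct_comm, mulVec_mulVec, h, neg_mulVec, dotProduct_neg, ← mulVec_mulVec]

lemma ip_mulVec_self {X : Matrix (Fin (p + q)) (Fin (p + q)) ℝ} (hX : X ∈ soSet p q)
    (x : Fin (p + q) → ℝ) : ip p q (X *ᵥ x) x = 0 := by
  have h := ip_mulVec_left hX x x
  rw [ip_comm x] at h
  linarith

lemma mem_soSet_iff (X : Matrix (Fin (p + q)) (Fin (p + q)) ℝ) :
    X ∈ soSet p q ↔ ∀ r c : Fin (p + q),
      X c r * (if (c : ℕ) < p then 1 else -1) + (if (r : ℕ) < p then 1 else -1) * X r c = 0 := by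
  simp only [soSet, Set.mem_ofPred_eq, ← Matrix.ext_iff, Matrix.add_apply, Jmat, mul_diagonal,
    diagonal_mul, transpose_apply, Matrix.zero_apply]

lemma mem_soSet_iff_ent (X : Matrix (Fin (p + q)) (Fin (p + q)) ℝ) :
    X ∈ soSet p q ↔ ∀ i j, 1 ≤ i → i ≤ p + q → 1 ≤ j → j ≤ p + q →
      (if i ≤ p then 1 else -1) * ent X i j + (if j ≤ p then 1 else -1) * ent X j i = 0 := by
  rw [mem_soSet_iff]
  constructor
  · intro h i j hi1 hi2 hj1 hj2
    have := h ⟨i - 1, by omega⟩ ⟨j - 1, by omega⟩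
    simp only [show i - 1 < p ↔ i ≤ p by omega, show j - 1 < p ↔ j ≤ p by omega] at this
    rw [ent_eq X hi1 hi2 hj1 hj2, ent_eq X hj1 hj2 hi1 hi2]
    linarith
  · intro h r c
    have := h (r + 1) (c + 1) (by omega) (by omega) (by omega) (by omega)
    simp only [ent_eq X (i := r + 1) (j := c + 1) (by omega) (by omega) (by omega) (by omega),
      ent_eq X (i := c + 1) (j := r + 1) (by omega) (by omega) (by omega) (by omega),
      Nat.add_sub_cancel, Fin.eta, show (r : ℕ) + 1 ≤ p ↔ (r : ℕ) < p by omega,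
      show (c : ℕ) + 1 ≤ p ↔ (c : ℕ) < p by omega] at this
    linarith

lemma kSet_subset_soSet {X : Matrix (Fin (p + q)) (Fin (p + q)) ℝ} (hpq : q ≤ p)
    (hX : X ∈ kSet p q) : X ∈ soSet p q := by
  obtain ⟨hskew, hzero⟩ := hX
  rw [mem_soSet_iff_ent]
  intro i j hi1 hi2 hj1 hj2
  by_cases h : i ≤ p - q ∧ j ≤ p - q
  · rw [if_pos (by omega), if_pos (by omega), hskew i j hi1 h.1 hj1 h.2]
    ring
  · rw [hzero i j hi1 hi2 hj1 hj2 h, hzero j i hj1 hj2 hi1 hi2 (by tauto)]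
    ring

lemma aSet_subset_soSet {X : Matrix (Fin (p + q)) (Fin (p + q)) ℝ} (hpq : q ≤ p)
    (hX : X ∈ aSet p q) : X ∈ soSet p q := by
  obtain ⟨hsymm, hzero⟩ := hX
  rw [mem_soSet_iff_ent]
  intro i j hi1 hi2 hj1 hj2
  by_cases h : ∃ l, 1 ≤ l ∧ l ≤ q ∧ ((i = p - l + 1 ∧ j = p + l) ∨ (i = p + l ∧ j = p - l + 1))
  · obtain ⟨l, hl1, hl2, ⟨rfl, rfl⟩ | ⟨rfl, rfl⟩⟩ := h
    · rw [if_pos (by omega), if_neg (by omega), hsymm l hl1 hl2]; ring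
    · rw [if_neg (by omega), if_pos (by omega), hsymm l hl1 hl2]; ring
  · have h' : ¬∃ l, 1 ≤ l ∧ l ≤ q ∧ ((j = p - l + 1 ∧ i = p + l) ∨ (j = p + l ∧ i = p - l + 1)) :=
      fun ⟨l, hl1, hl2, hl⟩ => h ⟨l, hl1, hl2, by tauto⟩
    rw [hzero i j hi1 hi2 hj1 hj2 h, hzero j i hj1 hj2 hi1 hi2 h']
    ring

lemma kSub_sup_aSub_sup_nSub_le_soSub (hpq : q ≤ p) :
    kSub p q ⊔ aSub p q ⊔ nSub p q ≤ soSub p q :=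
  sup_le (sup_le (fun _ hX => kSet_subset_soSet hpq hX) (fun _ hX => aSet_subset_soSet hpq hX))
    fun _ hX => hX.1

end OrthogonalAlgebra

section Wedge

variable {p q : ℕ}

/-- The image of `u ∧ v` under `Λ²ℝ^{p,q} ≅ 𝔰𝔬(p,q)`; see `wedge_mulVec`. -/
def wedge (p q : ℕ) (u v : Fin (p + q) → ℝ) : Matrix (Fin (p + q)) (Fin (p + q)) ℝ :=
  vecMulVec u (Jmat p q *ᵥ v) - vecMulVec v (Jmat p q *ᵥ u)

lemma wedge_mulVec (u v y : Fin (p + q) → ℝ) :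
    wedge p q u v *ᵥ y = ip p q v y • u - ip p q u y • v := by
  have key : ∀ w : Fin (p + q) → ℝ, (Jmat p q *ᵥ w) ⬝ᵥ y = ip p q w y := fun w => by
    unfold ip
    simp only [dotProduct, Jmat, mulVec_diagonal]
  simp only [wedge, sub_mulVec, vecMulVec_mulVec, op_smul_eq_smul, key]

lemma wedge_mem_soSet (u v : Fin (p + q) → ℝ) : wedge p q u v ∈ soSet p q := by
  rw [mem_soSet_iff]
  intro r c
  simp only [wedge, Matrix.sub_apply, vecMulVec_apply, Jmat, mulVec_diagonal]
  ring

lemma wedge_sub_left (u u' v : Fin (p + q) → ℝ) :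
    wedge p q (u - u') v = wedge p q u v - wedge p q u' v := by
  simp only [wedge, sub_vecMulVec, mulVec_sub, vecMulVec_sub]
  abel

lemma ent_wedge (u v : Fin (p + q) → ℝ) {i j : ℕ} (hi1 : 1 ≤ i) (hi2 : i ≤ p + q)
    (hj1 : 1 ≤ j) (hj2 : j ≤ p + q) :
    ent (wedge p q u v) i j =
      (if j ≤ p then 1 else -1) * (vent u i * vent v j - vent v i * vent u j) := by
  simp only [ent_eq _ hi1 hi2 hj1 hj2, vent_eq _ hi1 hi2, vent_eq _ hj1 hj2, wedge,
    Matrix.sub_apply, vecMulVec_apply, Jmat, mulVec_diagonal, show j - 1 < p ↔ j ≤ p by omega]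
  ring

lemma wedge_stdE_wVec_mem_nSub (hpq : q ≤ p) {a j : ℕ} (ha1 : 1 ≤ a) (ha2 : a ≤ q)
    (hj1 : 1 ≤ j) (hj2 : j ≤ p + q) (hj : j ≤ p - a ∨ p + a < j) :
    wedge p q (stdE (p + q) j) (wVec p q a) ∈ nSub p q := by
  refine ⟨wedge_mem_soSet _ _, ?_, ?_, ?_, ?_, ?_⟩ <;>
  · intros
    simp (disch := omega) only [ent_wedge, vent_stdE, vent_wVec, if_neg]
    split_ifs <;> first | (exfalso; omega) | norm_num

lemma wedge_wVec_wVec_mem_nSub (hpq : q ≤ p) {a b : ℕ} (ha1 : 1 ≤ a) (hab : a < b)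
    (hb : b ≤ q) : wedge p q (wVec p q b) (wVec p q a) ∈ nSub p q := by
  rw [wVec, wedge_sub_left]
  exact sub_mem
    (wedge_stdE_wVec_mem_nSub hpq ha1 (by omega) (by omega) (by omega) (by omega))
    (wedge_stdE_wVec_mem_nSub hpq ha1 (by omega) (by omega) (by omega) (by omega))

lemma wedge_stdE_stdE_mem_aSub (hpq : q ≤ p) {a : ℕ} (ha1 : 1 ≤ a) (ha2 : a ≤ q) :
    wedge p q (stdE (p + q) (p + a)) (stdE (p + q) (p - a + 1)) ∈ aSub p q := by
  refine ⟨fun l hl1 hl2 => ?_, fun i j hi1 hi2 hj1 hj2 hij => ?_⟩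
  · simp (disch := omega) only [ent_wedge, vent_stdE, if_neg]
    split_ifs <;> first | (exfalso; omega) | norm_num
  · push Not at hij
    have := hij a ha1 ha2
    simp (disch := omega) only [ent_wedge, vent_stdE]
    split_ifs <;> first | (exfalso; omega) | norm_num

lemma wedge_stdE_stdE_mem_kSub {s t : ℕ} (hs : s ≤ p - q) (ht : t ≤ p - q) :
    wedge p q (stdE (p + q) s) (stdE (p + q) t) ∈ kSub p q := by
  refine ⟨fun i j hi1 hi2 hj1 hj2 => ?_, fun i j hi1 hi2 hj1 hj2 hij => ?_⟩ <;>
  · simp (disch := omega) only [ent_wedge, vent_stdE]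
    split_ifs <;> first | (exfalso; omega) | norm_num

end Wedge

section Flag

variable {p q : ℕ}

/-- The isotropic flag `F_a = span {w_1, …, w_a}`. -/
def flag (p q a : ℕ) : Submodule ℝ (Fin (p + q) → ℝ) :=
  Submodule.span ℝ ((Finset.Icc 1 a).image (wVec p q))

lemma flag_le_iff {a : ℕ} {W : Submodule ℝ (Fin (p + q) → ℝ)} :
    flag p q a ≤ W ↔ ∀ b, 1 ≤ b → b ≤ a → wVec p q b ∈ W := by
  rw [flag, Submodule.span_le, Finset.coe_image, Set.image_subset_iff]
  simp [Set.subset_def]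

lemma wVec_mem_flag {a b : ℕ} (hb1 : 1 ≤ b) (hba : b ≤ a) : wVec p q b ∈ flag p q a :=
  flag_le_iff.1 le_rfl b hb1 hba

lemma flag_mono {a a' : ℕ} (h : a ≤ a') : flag p q a ≤ flag p q a' :=
  flag_le_iff.2 fun _ hb1 hba => wVec_mem_flag hb1 (hba.trans h)

lemma finrank_flag_le (a : ℕ) : finrank ℝ (flag p q a) ≤ a :=
  (finrank_span_finset_le_card _).trans (Finset.card_image_le.trans (by simp))

lemma ip_eq_zero_of_mem_flag {a : ℕ} {x y : Fin (p + q) → ℝ}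
    (hx : ∀ b, 1 ≤ b → b ≤ a → ip p q x (wVec p q b) = 0) (hy : y ∈ flag p q a) :
    ip p q x y = 0 := by
  have : flag p q a ≤ LinearMap.ker (ipR p q x) :=
    flag_le_iff.2 fun b hb1 hba => by simp [ip_comm, hx b hb1 hba]
  simpa [ip_comm] using this hy

lemma mem_flag_of_vent (hpq : q ≤ p) {a : ℕ} (ha : a ≤ q) {y : Fin (p + q) → ℝ}
    (hlow : ∀ j, 1 ≤ j → j ≤ p - q → vent y j = 0)
    (hw : ∀ b, 1 ≤ b → b ≤ q → ip p q y (wVec p q b) = 0)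
    (hhigh : ∀ b, a < b → b ≤ q → vent y (p + b) = 0) : y ∈ flag p q a := by
  induction a generalizing y with
  | zero =>
    convert (flag p q 0).zero_mem
    refine vent_ext fun i hi1 hi2 => ?_
    rw [vent_zero]
    rcases le_or_gt i (p - q) with h | h
    · exact hlow i hi1 h
    rcases le_or_gt i p with h' | h'
    · have := hw (p + 1 - i) (by omega) (by omega)
      rwa [ip_wVec_right _ hpq (by omega) (by omega), hhigh (p + 1 - i) (by omega) (by omega),
        show p - (p + 1 - i) + 1 = i by omega, add_zero] at this
    · simpa [show p + (i - p) = i by omega] using hhigh (i - p) (by omega) (by omega)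
  | succ a ih =>
    -- adding `c • w_{a+1}` clears the coordinate `p + a + 1`
    set c := vent y (p + (a + 1))
    have hy' : y + c • wVec p q (a + 1) ∈ flag p q a := by
      refine ih (by omega) (fun j hj1 hj2 => ?_) (fun b hb1 hb2 => ?_) (fun b hab hb => ?_)
      · simp (disch := omega) only [vent_add, vent_smul, vent_wVec, hlow j hj1 hj2, if_neg]
        ring
      · rw [ip_add_left, ip_smul_left, hw b hb1 hb2, ip_wVec_wVec hpq (by omega) (by omega) hb1 hb2]
        ring
      · rw [vent_add, vent_smul, vent_wVec (by omega) (by omega), if_neg (by omega)]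
        rcases (show b = a + 1 ∨ a + 1 < b by omega) with rfl | hab'
        · rw [if_pos rfl]; ring
        · rw [hhigh b hab' hb, if_neg (by omega)]; ring
    simpa using sub_mem (flag_mono a.le_succ hy')
      (Submodule.smul_mem _ c (wVec_mem_flag (by omega) le_rfl))

end Flag

section FlagPreservation

variable {p q : ℕ}

lemma vent_mulVec_wVec (X : Matrix (Fin (p + q)) (Fin (p + q)) ℝ) {a i : ℕ}
    (ha1 : 1 ≤ a) (ha2 : a ≤ q) (hi1 : 1 ≤ i) (hi2 : i ≤ p + q) :
    vent (X *ᵥ wVec p q a) i = ent X i (p - a + 1) - ent X i (p + a) := by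
  rw [wVec, mulVec_sub, vent_sub, vent_mulVec_stdE X hi1 hi2 (by omega) (by omega),
    vent_mulVec_stdE X hi1 hi2 (by omega) (by omega)]

lemma kSet_mulVec_wVec (hpq : q ≤ p) {X : Matrix (Fin (p + q)) (Fin (p + q)) ℝ}
    (hX : X ∈ kSet p q) {a : ℕ} (ha1 : 1 ≤ a) (ha2 : a ≤ q) : X *ᵥ wVec p q a = 0 :=
  vent_ext fun i hi1 hi2 => by
    rw [vent_mulVec_wVec X ha1 ha2 hi1 hi2, vent_zero,
      hX.2 i _ hi1 hi2 (by omega) (by omega) (by omega),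
      hX.2 i _ hi1 hi2 (by omega) (by omega) (by omega), sub_zero]

lemma aSet_mulVec_wVec (hpq : q ≤ p) {X : Matrix (Fin (p + q)) (Fin (p + q)) ℝ}
    (hX : X ∈ aSet p q) {a : ℕ} (ha1 : 1 ≤ a) (ha2 : a ≤ q) :
    X *ᵥ wVec p q a = -ent X (p - a + 1) (p + a) • wVec p q a := by
  obtain ⟨hsymm, hzero⟩ := hX
  refine vent_ext fun i hi1 hi2 => ?_
  have h1 : i ≠ p + a → ent X i (p - a + 1) = 0 := fun h =>
    hzero _ _ hi1 hi2 (by omega) (by omega) (by rintro ⟨l, -, -, h' | h'⟩ <;> omega)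
  have h2 : i ≠ p - a + 1 → ent X i (p + a) = 0 := fun h =>
    hzero _ _ hi1 hi2 (by omega) (by omega) (by rintro ⟨l, -, -, h' | h'⟩ <;> omega)
  rw [vent_mulVec_wVec X ha1 ha2 hi1 hi2, vent_smul, vent_wVec hi1 hi2]
  by_cases hi : i = p + a
  · subst hi
    rw [h2 (by omega), ← hsymm a ha1 ha2, if_neg (by omega), if_pos rfl]
    ring
  · rw [h1 hi, if_neg hi]
    by_cases hi' : i = p - a + 1
    · rw [hi', if_pos rfl]; ring
    · rw [h2 hi', if_neg hi']; ring

lemma nSet_vent_mulVec_wVec_eq_zero (hpq : q ≤ p) {X : Matrix (Fin (p + q)) (Fin (p + q)) ℝ}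
    (hX : X ∈ nSet p q) {a b : ℕ} (ha1 : 1 ≤ a) (hab : a < b) (hb : b ≤ q) :
    vent (X *ᵥ wVec p q a) (p - b + 1) = 0 ∧ vent (X *ᵥ wVec p q a) (p + b) = 0 := by
  obtain ⟨hso, -, -, -, h4, h5⟩ := hX
  have e4 := h4 a b ha1 hab hb
  have e5 := h5 a b ha1 hab hb
  have s1 := (mem_soSet_iff_ent X).1 hso (p + b) (p - a + 1) (by omega) (by omega) (by omega)
    (by omega)
  have s2 := (mem_soSet_iff_ent X).1 hso (p + b) (p + a) (by omega) (by omega) (by omega)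
    (by omega)
  rw [if_neg (by omega), if_pos (by omega)] at s1
  rw [if_neg (by omega), if_neg (by omega)] at s2
  simp only [show p + 1 - b = p - b + 1 by omega, show p + 1 - a = p - a + 1 by omega] at e4 e5
  rw [vent_mulVec_wVec X ha1 (by omega) (by omega) (by omega),
    vent_mulVec_wVec X ha1 (by omega) (by omega) (by omega)]
  constructor <;> linarith

lemma nSet_mulVec_wVec_mem_flag (hpq : q ≤ p) {X : Matrix (Fin (p + q)) (Fin (p + q)) ℝ}
    (hX : X ∈ nSet p q) {a : ℕ} (ha1 : 1 ≤ a) (ha2 : a ≤ q) :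
    X *ᵥ wVec p q a ∈ flag p q a := by
  refine mem_flag_of_vent hpq ha2 (fun j hj1 hj2 => ?_) (fun b hb1 hb2 => ?_)
    (fun b hab hb => (nSet_vent_mulVec_wVec_eq_zero hpq hX ha1 hab hb).2)
  · rw [vent_mulVec_wVec X ha1 ha2 hj1 (by omega), hX.2.2.2.1 j a hj1 hj2 ha1 ha2, sub_self]
  · rcases lt_trichotomy b a with hba | rfl | hab
    · -- skewness: `⟨X w_a, w_b⟩ = -⟨X w_b, w_a⟩`
      obtain ⟨h1, h2⟩ := nSet_vent_mulVec_wVec_eq_zero hpq hX hb1 hba ha2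
      rw [ip_mulVec_left hX.1, ip_comm, ip_wVec_right _ hpq ha1 ha2, h1, h2, add_zero, neg_zero]
    · exact ip_mulVec_self hX.1 _
    · obtain ⟨h1, h2⟩ := nSet_vent_mulVec_wVec_eq_zero hpq hX ha1 hab hb2
      rw [ip_wVec_right _ hpq hb1 hb2, h1, h2, add_zero]

lemma mulVec_wVec_mem_flag (hpq : q ≤ p) {X : Matrix (Fin (p + q)) (Fin (p + q)) ℝ}
    (hX : X ∈ kSub p q ⊔ aSub p q ⊔ nSub p q) {a : ℕ} (ha1 : 1 ≤ a) (ha2 : a ≤ q) :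
    X *ᵥ wVec p q a ∈ flag p q a := by
  suffices kSub p q ⊔ aSub p q ⊔ nSub p q ≤
      (flag p q a).comap ((mulVecBilin ℝ ℝ).flip (wVec p q a)) from this hX
  refine sup_le (sup_le (fun K hK => ?_) (fun A hA => ?_)) (fun N hN => ?_)
  · change K *ᵥ wVec p q a ∈ flag p q a
    rw [kSet_mulVec_wVec hpq hK ha1 ha2]
    exact zero_mem _
  · change A *ᵥ wVec p q a ∈ flag p q a
    rw [aSet_mulVec_wVec hpq hA ha1 ha2]
    exact Submodule.smul_mem _ _ (wVec_mem_flag ha1 le_rfl)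
  · exact nSet_mulVec_wVec_mem_flag hpq hN ha1 ha2

lemma mulVec_mem_flag (hpq : q ≤ p) {X : Matrix (Fin (p + q)) (Fin (p + q)) ℝ}
    (hX : X ∈ kSub p q ⊔ aSub p q ⊔ nSub p q) {a : ℕ} (ha : a ≤ q) {y : Fin (p + q) → ℝ}
    (hy : y ∈ flag p q a) : X *ᵥ y ∈ flag p q a :=
  (flag_le_iff (W := (flag p q a).comap X.mulVecLin)).2
    (fun _ hb1 hba => flag_mono hba (mulVec_wVec_mem_flag hpq hX hb1 (hba.trans ha))) hy

end FlagPreservation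

section OrbitTangent

variable {p q : ℕ}

/-- `𝔤 x` for `𝔤 = 𝔨₀ + 𝔞 + 𝔫`, the tangent space at `x` of the orbit `Q(x)`. -/
def orbitTangent (p q : ℕ) (x : Fin (p + q) → ℝ) : Submodule ℝ (Fin (p + q) → ℝ) :=
  (kSub p q ⊔ aSub p q ⊔ nSub p q).map ((mulVecBilin ℝ ℝ).flip x)

lemma finrank_sub_finrank_inf_kerAt (x : Fin (p + q) → ℝ) :
    finrank ℝ ↥(kSub p q ⊔ aSub p q ⊔ nSub p q) -
      finrank ℝ ↥((kSub p q ⊔ aSub p q ⊔ nSub p q) ⊓ kerAt x) =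
    finrank ℝ (orbitTangent p q x) := by
  have h := (kSub p q ⊔ aSub p q ⊔ nSub p q).finrank_map_add_finrank_inf_ker
    ((mulVecBilin ℝ ℝ).flip x)
  have hker : LinearMap.ker ((mulVecBilin ℝ ℝ).flip x) = kerAt x := rfl
  rw [hker] at h
  rw [orbitTangent]
  omega

lemma mulVec_mem_orbitTangent {X : Matrix (Fin (p + q)) (Fin (p + q)) ℝ}
    (hX : X ∈ kSub p q ⊔ aSub p q ⊔ nSub p q) (x : Fin (p + q) → ℝ) :
    X *ᵥ x ∈ orbitTangent p q x :=
  ⟨X, hX, rfl⟩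

lemma wedge_mulVec_mem_orbitTangent {u v : Fin (p + q) → ℝ}
    (h : wedge p q u v ∈ kSub p q ⊔ aSub p q ⊔ nSub p q) (x : Fin (p + q) → ℝ) :
    ip p q v x • u - ip p q u x • v ∈ orbitTangent p q x :=
  wedge_mulVec u v x ▸ mulVec_mem_orbitTangent h x

lemma ip_self_eq_zero_of_mem_orbitTangent (hpq : q ≤ p) {x y : Fin (p + q) → ℝ}
    (hy : y ∈ orbitTangent p q x) : ip p q y x = 0 := by
  obtain ⟨X, hX, rfl⟩ := hy
  exact ip_mulVec_self (kSub_sup_aSub_sup_nSub_le_soSub hpq hX) x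

lemma ip_wVec_eq_zero_of_mem_orbitTangent (hpq : q ≤ p) {x y : Fin (p + q) → ℝ} {b : ℕ}
    (hb1 : 1 ≤ b) (hb2 : b ≤ q) (hx : ∀ c, 1 ≤ c → c ≤ b → ip p q x (wVec p q c) = 0)
    (hy : y ∈ orbitTangent p q x) : ip p q y (wVec p q b) = 0 := by
  obtain ⟨X, hX, rfl⟩ := hy
  change ip p q (X *ᵥ x) _ = 0
  rw [ip_mulVec_left (kSub_sup_aSub_sup_nSub_le_soSub hpq hX),
    ip_eq_zero_of_mem_flag hx (mulVec_wVec_mem_flag hpq hX hb1 hb2), neg_zero]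

lemma orbitTangent_le_flag (hpq : q ≤ p) {a : ℕ} (ha : a ≤ q) {x : Fin (p + q) → ℝ}
    (hx : x ∈ flag p q a) : orbitTangent p q x ≤ flag p q a := by
  rintro _ ⟨X, hX, rfl⟩
  exact mulVec_mem_flag hpq hX ha hx

/-- `𝔤 x` lies in the common kernel of `⟨·, x⟩, ⟨·, w_1⟩, …, ⟨·, w_{m-1}⟩`, and `y₀` makes these
`m` functionals independent. -/
lemma finrank_orbitTangent_add_le (hpq : q ≤ p) {m : ℕ} (hm : m ≤ q + 1)
    {x y₀ : Fin (p + q) → ℝ} (hx : ∀ b, 1 ≤ b → b < m → ip p q x (wVec p q b) = 0)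
    (hy₀ : ip p q y₀ x ≠ 0) (hy₀w : ∀ b, 1 ≤ b → b < m → ip p q y₀ (wVec p q b) = 0) :
    finrank ℝ (orbitTangent p q x) + m ≤ p + q := by
  have := finrank_add_card_le_of_diagonal (orbitTangent p q x)
    (fun b => if b = 0 then ipR p q x else ipR p q (wVec p q b)) (Finset.range m) ?_ ?_
  · simpa using this
  · intro b hb
    rw [Finset.mem_range] at hb
    rcases Nat.eq_zero_or_pos b with rfl | hb0
    · refine ⟨y₀, by simpa using hy₀, fun j hj hj0 => ?_⟩
      rw [Finset.mem_range] at hj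
      simpa [hj0] using hy₀w j (by omega) hj
    · -- `⟨e_{p-b+1}, w_j⟩ = δ_{bj}`, corrected by a multiple of `y₀` to be orthogonal to `x`
      refine ⟨stdE (p + q) (p - b + 1) - (ip p q (stdE (p + q) (p - b + 1)) x / ip p q y₀ x) • y₀,
        ?_, fun j hj hjb => ?_⟩
      · simp (disch := omega) [hb0.ne', ip_sub_left, ip_smul_left, hy₀w b hb0 hb,
          ip_stdE_wVec hpq, if_neg]
      · rw [Finset.mem_range] at hj
        rcases Nat.eq_zero_or_pos j with rfl | hj0
        · simp [ip_sub_left, ip_smul_left, div_mul_cancel₀ _ hy₀]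
        · simp (disch := omega) [hj0.ne', ip_sub_left, ip_smul_left, hy₀w j hj0 hj,
            ip_stdE_wVec hpq, if_neg]
  · intro y hy b hb
    rw [Finset.mem_range] at hb
    rcases Nat.eq_zero_or_pos b with rfl | hb0
    · simpa using ip_self_eq_zero_of_mem_orbitTangent hpq hy
    · simpa [hb0.ne'] using ip_wVec_eq_zero_of_mem_orbitTangent hpq hb0 (by omega)
        (fun c hc1 hc2 => hx c hc1 (by omega)) hy

end OrbitTangent

section LowerBounds

variable {p q : ℕ}

lemma le_finrank_orbitTangent_of_ip_wVec_ne_zero (hpq : q ≤ p) {x : Fin (p + q) → ℝ} {k : ℕ}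
    (hk1 : 1 ≤ k) (hk2 : k ≤ q) (hk : ip p q x (wVec p q k) ≠ 0)
    (hlt : ∀ i, 1 ≤ i → i < k → ip p q x (wVec p q i) = 0) :
    p + q - k ≤ finrank ℝ (orbitTangent p q x) := by
  rw [ip_comm] at hk
  simp only [ip_comm x] at hlt
  let S := Finset.Icc 1 (p - k) ∪ Finset.Icc (p + 1) (p + q)
  have hS : S.card = p + q - k := by
    rw [card_union_Icc_of_forall_le (fun j hj => by simp only [Finset.mem_Icc] at hj; omega),
      Nat.card_Icc]
    omega
  rw [← hS]
  -- the coordinates outside `p - k + 1, …, p`, with `⟨·, w_k⟩` in place of the coordinate `p + k`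
  refine card_le_finrank_of_diagonal _
    (fun j => if j = p + k then ipR p q (wVec p q k) else ventL (p + q) j) S fun j hj => ?_
  simp only [S, Finset.mem_union, Finset.mem_Icc] at hj ⊢
  by_cases hjk : j = p + k
  · subst hjk
    refine ⟨_, wedge_mulVec_mem_orbitTangent (Submodule.mem_sup_left (Submodule.mem_sup_right
      (wedge_stdE_stdE_mem_aSub hpq hk1 hk2))) x, ?_, fun j' hj' hj'k => ?_⟩
    · simp (disch := omega) only [if_true, ipR_apply, ip_sub_left, ip_smul_left,
        ip_stdE_wVec hpq hk1 hk2, if_neg]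
      simpa [wVec, ip_sub_left] using hk
    · simp (disch := omega) [hj'k, vent_stdE, if_neg]
  rcases (show (j ≤ p - k ∨ p + k < j) ∨ p < j ∧ j < p + k by omega) with hj' | hj'
  · refine ⟨_, wedge_mulVec_mem_orbitTangent (Submodule.mem_sup_right
      (wedge_stdE_wVec_mem_nSub hpq hk1 hk2 (j := j) (by omega) (by omega) hj')) x, ?_,
      fun j' hj' hj'k => ?_⟩
    · simp (disch := omega) [hjk, hk, vent_wVec, vent_stdE, if_neg]
    · by_cases h : j' = p + k
      · simp (disch := omega) [h, ip_sub_left, ip_smul_left, ip_stdE_wVec hpq, ip_wVec_wVec, if_neg]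
      · simp (disch := omega) [h, vent_wVec, vent_stdE, if_neg]
  · obtain ⟨a, rfl⟩ : ∃ a, j = p + a := ⟨j - p, by omega⟩
    refine ⟨_, wedge_mulVec_mem_orbitTangent (Submodule.mem_sup_right
      (wedge_wVec_wVec_mem_nSub hpq (a := a) (b := k) (by omega) (by omega) hk2)) x, ?_,
      fun j' hj' hj'k => ?_⟩
    · simp (disch := omega) [hk, vent_wVec, if_neg]
    · by_cases h : j' = p + k
      · simp (disch := omega) [h, ip_sub_left, ip_smul_left, ip_wVec_wVec]
      · simp (disch := omega) [h, hlt a (by omega) (by omega), vent_wVec, if_neg]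

lemma le_finrank_orbitTangent_of_vent_ne_zero (hpq : q < p) {x : Fin (p + q) → ℝ}
    (hw : ∀ b, 1 ≤ b → b ≤ q → ip p q x (wVec p q b) = 0) {j₀ : ℕ} (hj₀1 : 1 ≤ j₀)
    (hj₀2 : j₀ ≤ p - q) (hj₀ : vent x j₀ ≠ 0) :
    p - 1 ≤ finrank ℝ (orbitTangent p q x) := by
  simp only [ip_comm x] at hw
  have hx : ip p q (stdE (p + q) j₀) x = vent x j₀ := by
    rw [ip_stdE_left x hj₀1 (by omega), if_pos (by omega), one_mul]
  let S := (Finset.Icc 1 (p - q)).erase j₀ ∪ Finset.Icc (p + 1) (p + q)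
  have hS : S.card = p - 1 := by
    rw [card_union_Icc_of_forall_le
        (fun j hj => by simp only [Finset.mem_erase, Finset.mem_Icc] at hj; omega),
      Finset.card_erase_of_mem (by simp only [Finset.mem_Icc]; omega), Nat.card_Icc]
    omega
  rw [← hS]
  refine card_le_finrank_of_diagonal _ (ventL (p + q)) S fun j hj => ?_
  simp only [S, Finset.mem_union, Finset.mem_erase, Finset.mem_Icc] at hj ⊢
  rcases (show j ≤ p - q ∨ p < j by omega) with hj' | hj'
  · refine ⟨_, wedge_mulVec_mem_orbitTangent (Submodule.mem_sup_left (Submodule.mem_sup_left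
      (wedge_stdE_stdE_mem_kSub hj' hj₀2))) x, ?_, fun j' hj' hj'j => ?_⟩
    · simp (disch := omega) [hx, hj₀, vent_stdE, if_neg]
    · simp (disch := omega) [vent_stdE, if_neg]
  · obtain ⟨a, rfl⟩ : ∃ a, j = p + a := ⟨j - p, by omega⟩
    refine ⟨_, wedge_mulVec_mem_orbitTangent (Submodule.mem_sup_right
      (wedge_stdE_wVec_mem_nSub hpq.le (a := a) (j := j₀) (by omega) (by omega) hj₀1 (by omega)
        (by omega))) x, ?_, fun j' hj' hj'j => ?_⟩
    · simp (disch := omega) [hx, hj₀, hw a, vent_wVec, if_neg]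
    · simp (disch := omega) [hw a, vent_wVec, if_neg]

lemma le_finrank_orbitTangent_of_mem_flag (hpq : q ≤ p) {x : Fin (p + q) → ℝ}
    (hw : ∀ b, 1 ≤ b → b ≤ q → ip p q x (wVec p q b) = 0) {l : ℕ} (hl1 : 1 ≤ l) (hl2 : l ≤ q)
    (hl : vent x (p + l) ≠ 0) :
    l ≤ finrank ℝ (orbitTangent p q x) := by
  have hx : ip p q (stdE (p + q) (p + l)) x = -vent x (p + l) := by
    rw [ip_stdE_left x (by omega) (by omega), if_neg (by omega), neg_one_mul]
  have hx' : ip p q (stdE (p + q) (p - l + 1)) x = -vent x (p + l) := by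
    have := hw l hl1 hl2
    rw [ip_wVec_right x hpq hl1 hl2] at this
    rw [ip_stdE_left x (by omega) (by omega), if_pos (by omega), one_mul]
    linarith
  simp only [ip_comm x] at hw
  have hS : (Finset.Icc (p + 1) (p + l)).card = l := by simp
  rw [← hS]
  refine card_le_finrank_of_diagonal _ (ventL (p + q)) _ fun j hj => ?_
  simp only [Finset.mem_Icc] at hj ⊢
  obtain ⟨a, rfl⟩ : ∃ a, j = p + a := ⟨j - p, by omega⟩
  rcases (show a < l ∨ a = l by omega) with ha | rfl
  · refine ⟨_, wedge_mulVec_mem_orbitTangent (Submodule.mem_sup_right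
      (wedge_stdE_wVec_mem_nSub hpq (a := a) (j := p + l) (by omega) (by omega) (by omega)
        (by omega) (by omega))) x, ?_, fun j' hj' hj'j => ?_⟩
    · simp (disch := omega) [hx, hl, hw a, vent_wVec, if_neg]
    · simp (disch := omega) [hw a, vent_wVec, if_neg]
  · refine ⟨_, wedge_mulVec_mem_orbitTangent (Submodule.mem_sup_left (Submodule.mem_sup_right
      (wedge_stdE_stdE_mem_aSub hpq hl1 hl2))) x, ?_, fun j' hj' hj'j => ?_⟩
    · simp (disch := omega) [hx', hl, vent_stdE, if_neg]
    · simp (disch := omega) [vent_stdE, if_neg]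

end LowerBounds

section Dimension

variable {p q : ℕ}

theorem finrank_orbitTangent_of_ip_wVec_ne_zero (hpq : q ≤ p) {x : Fin (p + q) → ℝ} {k : ℕ}
    (hk1 : 1 ≤ k) (hk2 : k ≤ q) (hk : ip p q x (wVec p q k) ≠ 0)
    (hlt : ∀ i, 1 ≤ i → i < k → ip p q x (wVec p q i) = 0) :
    finrank ℝ (orbitTangent p q x) = p + q - k := by
  have := finrank_orbitTangent_add_le hpq (m := k) (by omega) hlt (y₀ := wVec p q k)
    (by rwa [ip_comm]) fun b hb1 hbk => ip_wVec_wVec hpq hk1 hk2 hb1 (by omega)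
  have := le_finrank_orbitTangent_of_ip_wVec_ne_zero hpq hk1 hk2 hk hlt
  omega

theorem finrank_orbitTangent_of_vent_ne_zero (hpq : q < p) {x : Fin (p + q) → ℝ}
    (hw : ∀ b, 1 ≤ b → b ≤ q → ip p q x (wVec p q b) = 0) {j₀ : ℕ} (hj₀1 : 1 ≤ j₀)
    (hj₀2 : j₀ ≤ p - q) (hj₀ : vent x j₀ ≠ 0) :
    finrank ℝ (orbitTangent p q x) = p - 1 := by
  have := finrank_orbitTangent_add_le hpq.le (m := q + 1) le_rfl
    (fun b hb1 hb2 => hw b hb1 (by omega)) (y₀ := stdE (p + q) j₀)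
    (by rwa [ip_stdE_left x hj₀1 (by omega), if_pos (by omega), one_mul])
    fun b hb1 hb2 => by simp (disch := omega) [ip_stdE_wVec hpq.le, if_neg]
  have := le_finrank_orbitTangent_of_vent_ne_zero hpq hw hj₀1 hj₀2 hj₀
  omega

theorem finrank_orbitTangent_of_mem_flag (hpq : q ≤ p) {x : Fin (p + q) → ℝ}
    (hlow : ∀ j, 1 ≤ j → j ≤ p - q → vent x j = 0)
    (hw : ∀ b, 1 ≤ b → b ≤ q → ip p q x (wVec p q b) = 0) {l : ℕ} (hl1 : 1 ≤ l) (hl2 : l ≤ q)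
    (hl : vent x (p + l) ≠ 0) (hhigh : ∀ b, l < b → b ≤ q → vent x (p + b) = 0) :
    finrank ℝ (orbitTangent p q x) = l :=
  le_antisymm
    ((Submodule.finrank_mono (orbitTangent_le_flag hpq hl2
      (mem_flag_of_vent hpq hl2 hlow hw hhigh))).trans (finrank_flag_le l))
    (le_finrank_orbitTangent_of_mem_flag hpq hw hl1 hl2 hl)

end Dimension

theorem KAN_orbit_dim_general (p q : ℕ) (hpq : q ≤ p)
    (x : Fin (p + q) → ℝ) :
    (∀ k, 1 ≤ k → k ≤ q → vent x (p - k + 1) + vent x (p + k) ≠ 0 →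
      (∀ i, 1 ≤ i → i < k → vent x (p - i + 1) + vent x (p + i) = 0) →
      Module.finrank ℝ ↥(kSub p q ⊔ aSub p q ⊔ nSub p q) -
        Module.finrank ℝ ↥((kSub p q ⊔ aSub p q ⊔ nSub p q) ⊓ kerAt x) = p + q - k) ∧
    (q < p → (∀ i, 1 ≤ i → i ≤ q → vent x (p - i + 1) + vent x (p + i) = 0) →
      (∃ j, 1 ≤ j ∧ j ≤ p - q ∧ vent x j ≠ 0) →
      Module.finrank ℝ ↥(kSub p q ⊔ aSub p q ⊔ nSub p q) -
        Module.finrank ℝ ↥((kSub p q ⊔ aSub p q ⊔ nSub p q) ⊓ kerAt x) = p - 1) ∧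
    ((∀ j, 1 ≤ j → j ≤ p - q → vent x j = 0) →
      (∀ i, 1 ≤ i → i ≤ q → vent x (p - i + 1) + vent x (p + i) = 0) →
      ∀ l, 1 ≤ l → l ≤ q → vent x (p + l) ≠ 0 →
        (∀ j, l < j → j ≤ q → vent x (p + j) = 0) →
        Module.finrank ℝ ↥(kSub p q ⊔ aSub p q ⊔ nSub p q) -
          Module.finrank ℝ ↥((kSub p q ⊔ aSub p q ⊔ nSub p q) ⊓ kerAt x) = l) := by
  simp only [finrank_sub_finrank_inf_kerAt]
  refine ⟨fun k hk1 hk2 hk hlt => ?_, fun hqp hw ⟨j, hj1, hj2, hj⟩ => ?_,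
    fun hlow hw l hl1 hl2 hl hhigh => ?_⟩
  · rw [← ip_wVec_right x hpq hk1 hk2] at hk
    exact finrank_orbitTangent_of_ip_wVec_ne_zero hpq hk1 hk2 hk fun i hi1 hik =>
      (ip_wVec_right x hpq hi1 (by omega)).trans (hlt i hi1 hik)
  · exact finrank_orbitTangent_of_vent_ne_zero hqp
      (fun b hb1 hb2 => (ip_wVec_right x hpq hb1 hb2).trans (hw b hb1 hb2)) hj1 hj2 hj
  · exact finrank_orbitTangent_of_mem_flag hpq hlow
      (fun b hb1 hb2 => (ip_wVec_right x hpq hb1 hb2).trans (hw b hb1 hb2)) hl1 hl2 hl hhigh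

/-- For `𝔤 := 𝔨₀ + 𝔞 + 𝔫` and `x ≠ 0`, `m := dim 𝔤 - dim 𝔤_x` satisfies:
(a) if `k` is the minimal index `1 ≤ k ≤ q` with `x^{p-k+1} + x^{p+k} ≠ 0`, then `m = p+q-k`;
(b) if `p > q`, `x^{p-i+1} + x^{p+i} = 0` for all `i`, and `x^j ≠ 0` for some
`1 ≤ j ≤ p-q`, then `m = p-1`;
(c) if `x^j = 0` for `1 ≤ j ≤ p-q` and `x^{p-i+1} + x^{p+i} = 0` for all `i`, then `m` is
the largest `l ∈ {1, ..., q}` with `x^{p+l} ≠ 0`. -/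
theorem KAN_orbit_dim (p q : ℕ) (hq : 1 ≤ q) (hpq : q ≤ p)
    (x : Fin (p + q) → ℝ) (hx : x ≠ 0) :
    (∀ k, 1 ≤ k → k ≤ q → vent x (p - k + 1) + vent x (p + k) ≠ 0 →
      (∀ i, 1 ≤ i → i < k → vent x (p - i + 1) + vent x (p + i) = 0) →
      Module.finrank ℝ ↥(kSub p q ⊔ aSub p q ⊔ nSub p q) -
        Module.finrank ℝ ↥((kSub p q ⊔ aSub p q ⊔ nSub p q) ⊓ kerAt x) = p + q - k) ∧
    (q < p → (∀ i, 1 ≤ i → i ≤ q → vent x (p - i + 1) + vent x (p + i) = 0) →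
      (∃ j, 1 ≤ j ∧ j ≤ p - q ∧ vent x j ≠ 0) →
      Module.finrank ℝ ↥(kSub p q ⊔ aSub p q ⊔ nSub p q) -
        Module.finrank ℝ ↥((kSub p q ⊔ aSub p q ⊔ nSub p q) ⊓ kerAt x) = p - 1) ∧
    ((∀ j, 1 ≤ j → j ≤ p - q → vent x j = 0) →
      (∀ i, 1 ≤ i → i ≤ q → vent x (p - i + 1) + vent x (p + i) = 0) →
      ∀ l, 1 ≤ l → l ≤ q → vent x (p + l) ≠ 0 →
        (∀ j, l < j → j ≤ q → vent x (p + j) = 0) →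
        Module.finrank ℝ ↥(kSub p q ⊔ aSub p q ⊔ nSub p q) -
          Module.finrank ℝ ↥((kSub p q ⊔ aSub p q ⊔ nSub p q) ⊓ kerAt x) = l) :=
  KAN_orbit_dim_general p q hpq x
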